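/- For any càdlàg function f : [a,b] → ℝ, the map c ↦ TV^c(f,[a,b]) on (0,∞) is non-increasing, convex and continuous; moreover lim_{c↓0} TV^c(f,[a,b]) = TV(f,[a,b]) (possibly +∞), and TV^c(f,[a,b]) = 0 whenever c ≥ ‖f‖_osc := sup_{s,u∈[a,b]} |f(s) − f(u)|. -/

import Mathlib

open Set Filter

/-- A finite partition `t 0 < t 1 < ... < t n` of points in `[a, b]`. -/
def IsPart (a b : ℝ) (n : ℕ) (t : ℕ → ℝ) : Prop :=
  a ≤ t 0 ∧ t n ≤ b ∧ ∀ i < n, t i < t (i + 1)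

/-- Total variation of `f` on `[a, b]`. -/
noncomputable def TVar {E : Type*} [PseudoMetricSpace E] (f : ℝ → E) (a b : ℝ) : ENNReal :=
  ⨆ (n : ℕ) (t : ℕ → ℝ) (_ : IsPart a b n t),
    ∑ i ∈ Finset.range n, ENNReal.ofReal (dist (f (t (i + 1))) (f (t i)))

/-- Truncated variation of `f` at level `c` on `[a, b]`. -/
noncomputable def TVc {E : Type*} [PseudoMetricSpace E] (f : ℝ → E) (c a b : ℝ) : ENNReal :=
  ⨆ (n : ℕ) (t : ℕ → ℝ) (_ : IsPart a b n t),
    ∑ i ∈ Finset.range n, ENNReal.ofReal (dist (f (t (i + 1))) (f (t i)) - c)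

/-- Upward truncated variation. -/
noncomputable def UTVc (f : ℝ → ℝ) (c a b : ℝ) : ENNReal :=
  ⨆ (n : ℕ) (t : ℕ → ℝ) (_ : IsPart a b n t),
    ∑ i ∈ Finset.range n, ENNReal.ofReal (f (t (i + 1)) - f (t i) - c)

/-- Downward truncated variation. -/
noncomputable def DTVc (f : ℝ → ℝ) (c a b : ℝ) : ENNReal :=
  ⨆ (n : ℕ) (t : ℕ → ℝ) (_ : IsPart a b n t),
    ∑ i ∈ Finset.range n, ENNReal.ofReal (f (t i) - f (t (i + 1)) - c)

/-- `f` is càdlàg on `[a, b]`: right-continuous on `[a, b)`, with left limits on `(a, b]`. -/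
def Cadlag {E : Type*} [TopologicalSpace E] (f : ℝ → E) (a b : ℝ) : Prop :=
  (∀ t ∈ Set.Ico a b, Tendsto f (nhdsWithin t (Set.Ioi t)) (nhds (f t))) ∧
  (∀ t ∈ Set.Ioc a b, ∃ l, Tendsto f (nhdsWithin t (Set.Iio t)) (nhds l))

/-!
For `c > 0`, right-continuity and the existence of left limits give, by continuous induction
along `[a, b]`, a finite set `S` cutting `[a, b]` into pieces `[s, s')` on which `f` oscillates by
at most `c`. An increment of a partition that exceeds `c` must straddle a point of `S`, and
distinct increments straddle distinct points, so at most `#S` terms of a truncated partition sum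
are nonzero, each bounded by the diameter of `f '' [a, b]`: `TV^c` is finite. Every partition
sum is non-increasing and convex in `c`, hence so is their supremum, and a finite convex function
on an open interval is continuous. As `c ↓ 0` each partition sum tends to the corresponding sum
for `TV`, which gives the limit.
-/

open Topology

section TruncatedVariation

variable {E : Type*} [PseudoMetricSpace E] {f : ℝ → E} {a b c : ℝ}

namespace IsPart

variable {n : ℕ} {t : ℕ → ℝ}

lemma strictMonoOn (ht : IsPart a b n t) : StrictMonoOn t (Iic n) :=
  strictMonoOn_Iic_of_lt_succ ht.2.2

lemma mem_Icc (ht : IsPart a b n t) {i : ℕ} (hi : i ≤ n) : t i ∈ Icc a b :=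
  ⟨ht.1.trans (ht.strictMonoOn.monotoneOn (Nat.zero_le n) hi (Nat.zero_le i)),
    (ht.strictMonoOn.monotoneOn hi (le_refl n) hi).trans ht.2.1⟩

lemma eq_of_mem_Ioc {i j : ℕ} {s : ℝ} (ht : IsPart a b n t) (hi : i < n) (hj : j < n)
    (hsi : s ∈ Ioc (t i) (t (i + 1))) (hsj : s ∈ Ioc (t j) (t (j + 1))) : i = j := by
  by_contra hne
  wlog hij : i < j generalizing i j
  · exact this hj hi hsj hsi (Ne.symm hne) (lt_of_le_of_ne (not_lt.1 hij) (Ne.symm hne))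
  have := ht.strictMonoOn.monotoneOn (show i + 1 ∈ Iic n from hi) (show j ∈ Iic n from hj.le) hij
  linarith [hsi.2, hsj.1]

end IsPart

lemma sum_le_TVc {n : ℕ} {t : ℕ → ℝ} (ht : IsPart a b n t) :
    ∑ i ∈ Finset.range n, ENNReal.ofReal (dist (f (t (i + 1))) (f (t i)) - c) ≤ TVc f c a b :=
  le_iSup₂_of_le n t (le_iSup_of_le ht le_rfl)

lemma antitone_TVc : Antitone fun c => TVc f c a b := by
  intro c₁ c₂ h
  simp only [TVc]
  gcongr with n t ht i

lemma TVc_le_TVar (hc : 0 ≤ c) : TVc f c a b ≤ TVar f a b := by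
  unfold TVc TVar
  gcongr with n t ht i
  linarith

lemma TVc_eq_zero_of_dist_le (h : ∀ s ∈ Icc a b, ∀ u ∈ Icc a b, dist (f s) (f u) ≤ c) :
    TVc f c a b = 0 := by
  simp only [TVc, ENNReal.iSup_eq_zero]
  intro n t ht
  refine Finset.sum_eq_zero fun i hi => ENNReal.ofReal_eq_zero.2 (sub_nonpos.2 ?_)
  have hi : i < n := Finset.mem_range.1 hi
  exact h _ (ht.mem_Icc hi) _ (ht.mem_Icc hi.le)

lemma ofReal_sub_convexComb_le (d x y : ℝ) {p q : ℝ} (hp : 0 ≤ p) (hq : 0 ≤ q) (hpq : p + q = 1) :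
    ENNReal.ofReal (d - (p * x + q * y)) ≤
      ENNReal.ofReal p * ENNReal.ofReal (d - x) + ENNReal.ofReal q * ENNReal.ofReal (d - y) := by
  rw [← ENNReal.ofReal_mul hp, ← ENNReal.ofReal_mul hq]
  refine le_of_eq_of_le (congrArg ENNReal.ofReal ?_) ENNReal.ofReal_add_le
  linear_combination (-d) * hpq

lemma TVc_convexComb_le (x y : ℝ) {p q : ℝ} (hp : 0 ≤ p) (hq : 0 ≤ q) (hpq : p + q = 1) :
    TVc f (p * x + q * y) a b ≤
      ENNReal.ofReal p * TVc f x a b + ENNReal.ofReal q * TVc f y a b := by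
  refine iSup₂_le fun n t => iSup_le fun ht => ?_
  grw [Finset.sum_le_sum fun i _ => ofReal_sub_convexComb_le _ x y hp hq hpq,
    Finset.sum_add_distrib, ← Finset.mul_sum, ← Finset.mul_sum, sum_le_TVc ht, sum_le_TVc ht]

theorem tendsto_TVc_nhdsGT_zero :
    Tendsto (fun c => TVc f c a b) (𝓝[>] 0) (𝓝 (TVar f a b)) := by
  refine tendsto_order.2 ⟨fun l hl => ?_, fun u hu =>
    eventually_nhdsWithin_of_forall fun c hc => (TVc_le_TVar (le_of_lt hc)).trans_lt hu⟩
  obtain ⟨n, t, ht, hlt⟩ : ∃ n t, ∃ _ : IsPart a b n t,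
      l < ∑ i ∈ Finset.range n, ENNReal.ofReal (dist (f (t (i + 1))) (f (t i))) := by
    simpa only [TVar, lt_iSup_iff] using hl
  have hcont : Continuous fun c : ℝ =>
      ∑ i ∈ Finset.range n, ENNReal.ofReal (dist (f (t (i + 1))) (f (t i)) - c) :=
    continuous_finsetSum _ fun i _ =>
      ENNReal.continuous_ofReal.comp (continuous_const.sub continuous_id)
  have hlim : Tendsto (fun c : ℝ =>
      ∑ i ∈ Finset.range n, ENNReal.ofReal (dist (f (t (i + 1))) (f (t i)) - c)) (𝓝[>] 0)
      (𝓝 (∑ i ∈ Finset.range n, ENNReal.ofReal (dist (f (t (i + 1))) (f (t i))))) := by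
    simpa only [sub_zero] using (hcont.tendsto 0).mono_left nhdsWithin_le_nhds
  filter_upwards [hlim.eventually (eventually_gt_nhds hlt)] with c hc
  exact hc.trans_le (sum_le_TVc ht)

/-- Points `u ≤ v` lie in a common piece `[s, s')` cut out of `[a, b]` by `S` exactly when no point
of `S` lies in `(u, v]`; on each piece `f` oscillates by at most `ε`. -/
def IsOscCut (f : ℝ → E) (ε a b : ℝ) (S : Finset ℝ) : Prop :=
  ∀ u ∈ Icc a b, ∀ v ∈ Icc a b, u ≤ v → Disjoint (S : Set ℝ) (Ioc u v) → dist (f v) (f u) ≤ ε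

namespace IsOscCut

variable {ε : ℝ} {S : Finset ℝ}

lemma of_le {x : ℝ} (hS : IsOscCut f ε a b S) (hx : x ≤ b) : IsOscCut f ε a x S :=
  fun u hu v hv => hS u ⟨hu.1, hu.2.trans hx⟩ v ⟨hv.1, hv.2.trans hx⟩

lemma extend {z : ℝ} (hε : 0 ≤ ε) (hS : IsOscCut f ε a b S) (hbz : b < z)
    (hosc : ∀ u ∈ Ico b z, ∀ v ∈ Ico b z, dist (f v) (f u) ≤ ε) :
    IsOscCut f ε a z (insert b (insert z S)) := by
  intro u hu v hv huv hdisj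
  simp only [Finset.coe_insert, disjoint_insert_left, mem_Ioc, not_and_or, not_lt,
    not_le] at hdisj
  obtain ⟨hb, hz, hdisj⟩ := hdisj
  rcases le_or_gt v b with hvb | hbv
  · exact hS u ⟨hu.1, huv.trans hvb⟩ v ⟨hv.1, hvb⟩ huv hdisj
  have hbu : b ≤ u := hb.resolve_right hbv.not_gt
  rcases hv.2.eq_or_lt with rfl | hvz
  · obtain rfl : u = v := le_antisymm huv (hz.resolve_right (lt_irrefl v))
    simpa using hε
  · exact hosc u ⟨hbu, huv.trans_lt hvz⟩ v ⟨hbv.le, hvz⟩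

lemma isBounded_image (hS : IsOscCut f ε a b S) : Bornology.IsBounded (f '' Icc a b) := by
  refine ((Set.toFinite (f '' (insert a S : Finset ℝ))).isBounded.cthickening (δ := ε)).subset ?_
  rintro _ ⟨u, hu, rfl⟩
  set below := (insert a S).filter (· ≤ u)
  have ha : a ∈ below := by simp [below, hu.1]
  set p := below.max' ⟨a, ha⟩
  have hp : p ∈ below := below.max'_mem _
  have hap : a ≤ p := below.le_max' a ha
  have hpu : p ≤ u := (Finset.mem_filter.1 hp).2
  refine Metric.mem_cthickening_of_dist_le _ (f p) _ _ ⟨p, (Finset.mem_filter.1 hp).1, rfl⟩ ?_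
  refine hS p ⟨hap, hpu.trans hu.2⟩ u hu hpu (Set.disjoint_left.2 fun s hs hsI => ?_)
  exact hsI.1.not_ge (below.le_max' s (by simp [below, Finset.mem_coe.1 hs, hsI.2]))

lemma TVc_le (hc : 0 ≤ c) (hS : IsOscCut f c a b S) :
    TVc f c a b ≤ S.card * Metric.ediam (f '' Icc a b) := by
  refine iSup₂_le fun n t => iSup_le fun ht => ?_
  set jumps := (Finset.range n).filter fun i => c < dist (f (t (i + 1))) (f (t i))
  have hcard : jumps.card ≤ S.card := by
    refine Finset.card_le_card_of_forall_subsingleton (fun i s => s ∈ Ioc (t i) (t (i + 1)))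
      (fun i hi => ?_) fun s _ i hi j hj => ?_
    · obtain ⟨hi, hjump⟩ := Finset.mem_filter.1 hi
      by_contra! h
      exact hjump.not_ge (hS _ (ht.mem_Icc (Finset.mem_range.1 hi).le) _
        (ht.mem_Icc (Finset.mem_range.1 hi)) (ht.2.2 _ (Finset.mem_range.1 hi)).le
        (Set.disjoint_left.2 h))
    · exact ht.eq_of_mem_Ioc (Finset.mem_range.1 (Finset.mem_filter.1 hi.1).1)
        (Finset.mem_range.1 (Finset.mem_filter.1 hj.1).1) hi.2 hj.2
  calc ∑ i ∈ Finset.range n, ENNReal.ofReal (dist (f (t (i + 1))) (f (t i)) - c)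
      = ∑ i ∈ jumps, ENNReal.ofReal (dist (f (t (i + 1))) (f (t i)) - c) := by
        refine (Finset.sum_filter_of_ne fun i _ h => ?_).symm
        simpa [ENNReal.ofReal_eq_zero] using h
    _ ≤ jumps.card • Metric.ediam (f '' Icc a b) := by
        refine Finset.sum_le_card_nsmul _ _ _ fun i hi => ?_
        have hi : i < n := Finset.mem_range.1 (Finset.mem_filter.1 hi).1
        calc ENNReal.ofReal (dist (f (t (i + 1))) (f (t i)) - c)
            ≤ ENNReal.ofReal (dist (f (t (i + 1))) (f (t i))) :=
              ENNReal.ofReal_le_ofReal (by linarith)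
          _ = edist (f (t (i + 1))) (f (t i)) := (edist_dist _ _).symm
          _ ≤ _ := Metric.edist_le_ediam_of_mem (mem_image_of_mem f (ht.mem_Icc hi))
              (mem_image_of_mem f (ht.mem_Icc hi.le))
    _ ≤ S.card * Metric.ediam (f '' Icc a b) := by
        rw [nsmul_eq_mul]
        gcongr

end IsOscCut

section Cadlag

variable {ε x : ℝ}

lemma dist_le_of_forall_dist_lt_half {s : Set ℝ} {l : E} (h : ∀ u ∈ s, dist (f u) l < ε / 2) :
    ∀ u ∈ s, ∀ v ∈ s, dist (f v) (f u) ≤ ε := fun u hu v hv =>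
  ((dist_triangle_right _ _ l).trans_lt (by linarith [h u hu, h v hv])).le

lemma Cadlag.exists_oscillation_le_right (hf : Cadlag f a b) (hε : 0 < ε) (hx : x ∈ Ico a b) :
    ∃ z > x, ∀ u ∈ Ico x z, ∀ v ∈ Ico x z, dist (f v) (f u) ≤ ε := by
  have hcont : Tendsto f (𝓝[≥] x) (𝓝 (f x)) := continuousWithinAt_Ioi_iff_Ici.1 (hf.1 x hx)
  obtain ⟨z, hxz, hz⟩ := mem_nhdsGE_iff_exists_Ico_subset.1
    (hcont.eventually (Metric.ball_mem_nhds _ (half_pos hε)))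
  exact ⟨z, hxz, dist_le_of_forall_dist_lt_half hz⟩

lemma Cadlag.exists_oscillation_le_left (hf : Cadlag f a b) (hε : 0 < ε) (hx : x ∈ Ioc a b) :
    ∃ y < x, ∀ u ∈ Ioo y x, ∀ v ∈ Ioo y x, dist (f v) (f u) ≤ ε := by
  obtain ⟨l, hl⟩ := hf.2 x hx
  obtain ⟨y, hyx, hy⟩ := mem_nhdsLT_iff_exists_Ioo_subset.1
    (hl.eventually (Metric.ball_mem_nhds _ (half_pos hε)))
  exact ⟨y, hyx, dist_le_of_forall_dist_lt_half hy⟩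

theorem Cadlag.exists_isOscCut (hf : Cadlag f a b) (hε : 0 < ε) :
    ∃ S, IsOscCut f ε a b S := by
  rcases lt_or_ge b a with hba | hab
  · exact ⟨∅, fun u hu => absurd (hu.1.trans hu.2) hba.not_ge⟩
  set good := {x | ∃ S, IsOscCut f ε a x S}
  have ha : a ∈ good := ⟨∅, fun u hu v hv _ _ => by
    obtain rfl : u = v := by linarith [hu.1, hu.2, hv.1, hv.2]
    simpa using hε.le⟩
  have hclosed : IsClosed (good ∩ Icc a b) := by
    refine isClosed_of_closure_subset fun x hx => ?_
    have hxI : x ∈ Icc a b := closure_minimal inter_subset_right isClosed_Icc hx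
    rcases hxI.1.eq_or_lt with rfl | hax
    · exact ⟨ha, hxI⟩
    obtain ⟨y, hyx, hosc⟩ := hf.exists_oscillation_le_left hε ⟨hax, hxI.2⟩
    obtain ⟨w, hyw, ⟨S, hS⟩, -⟩ := mem_closure_iff.1 hx (Ioi y) isOpen_Ioi hyx
    rcases le_or_gt x w with hxw | hwx
    · exact ⟨⟨S, hS.of_le hxw⟩, hxI⟩
    · refine ⟨⟨_, hS.extend hε.le hwx fun u hu v hv => ?_⟩, hxI⟩
      exact hosc u ⟨hyw.trans_le hu.1, hu.2⟩ v ⟨hyw.trans_le hv.1, hv.2⟩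
  have hgt : ∀ x ∈ good ∩ Ico a b, good ∈ 𝓝[>] x := by
    rintro x ⟨⟨S, hS⟩, hxI⟩
    obtain ⟨z, hxz, hosc⟩ := hf.exists_oscillation_le_right hε hxI
    filter_upwards [Ioo_mem_nhdsGT hxz] with w hw
    refine ⟨_, hS.extend hε.le hw.1 fun u hu v hv => ?_⟩
    exact hosc u ⟨hu.1, hu.2.trans hw.2⟩ v ⟨hv.1, hv.2.trans hw.2⟩
  exact hclosed.Icc_subset_of_forall_mem_nhdsWithin ha hgt ⟨hab, le_rfl⟩

theorem Cadlag.TVc_ne_top (hf : Cadlag f a b) (hc : 0 < c) : TVc f c a b ≠ ⊤ := by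
  obtain ⟨S, hS⟩ := hf.exists_isOscCut hc
  exact ne_top_of_le_ne_top (ENNReal.mul_ne_top (ENNReal.natCast_ne_top _)
    hS.isBounded_image.ediam_ne_top) (hS.TVc_le hc.le)

end Cadlag

lemma Cadlag.antitoneOn_toReal_TVc (hf : Cadlag f a b) :
    AntitoneOn (fun c => (TVc f c a b).toReal) (Ioi 0) := fun _ hx _ _ hxy =>
  ENNReal.toReal_mono (hf.TVc_ne_top hx) (antitone_TVc hxy)

lemma Cadlag.convexOn_toReal_TVc (hf : Cadlag f a b) :
    ConvexOn ℝ (Ioi 0) fun c => (TVc f c a b).toReal := by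
  refine ⟨convex_Ioi 0, fun x hx y hy p q hp hq hpq => ?_⟩
  have hx := hf.TVc_ne_top hx
  have hy := hf.TVc_ne_top hy
  calc (TVc f (p • x + q • y) a b).toReal
      ≤ (ENNReal.ofReal p * TVc f x a b + ENNReal.ofReal q * TVc f y a b).toReal :=
        ENNReal.toReal_mono (by finiteness) (TVc_convexComb_le x y hp hq hpq)
    _ = p • (TVc f x a b).toReal + q • (TVc f y a b).toReal := by
        rw [ENNReal.toReal_add (by finiteness) (by finiteness), ENNReal.toReal_mul,
          ENNReal.toReal_mul, ENNReal.toReal_ofReal hp, ENNReal.toReal_ofReal hq, smul_eq_mul,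
          smul_eq_mul]

end TruncatedVariation

theorem tvc_properties_in_c_general (a b : ℝ) (f : ℝ → ℝ)
    (hf : Cadlag f a b) :
    AntitoneOn (fun c => (TVc f c a b).toReal) (Set.Ioi (0 : ℝ)) ∧
    ConvexOn ℝ (Set.Ioi (0 : ℝ)) (fun c => (TVc f c a b).toReal) ∧
    ContinuousOn (fun c => (TVc f c a b).toReal) (Set.Ioi (0 : ℝ)) ∧
    Tendsto (fun c => TVc f c a b) (nhdsWithin 0 (Set.Ioi 0)) (nhds (TVar f a b)) ∧
    (∀ c : ℝ, (∀ s ∈ Set.Icc a b, ∀ u ∈ Set.Icc a b, |f s - f u| ≤ c) →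
      TVc f c a b = 0) := by
  have hconv := hf.convexOn_toReal_TVc
  refine ⟨hf.antitoneOn_toReal_TVc, hconv, hconv.continuousOn isOpen_Ioi,
    tendsto_TVc_nhdsGT_zero, fun c hc => TVc_eq_zero_of_dist_le ?_⟩
  simpa only [Real.dist_eq] using hc

/-- `c ↦ TV^c(f,[a,b])` is non-increasing, convex and continuous on
`(0, ∞)`; `TV^c(f,[a,b]) → TV(f,[a,b])` (possibly `+∞`) as `c ↓ 0`; and
`TV^c(f,[a,b]) = 0` whenever `c` dominates the oscillation of `f` on `[a, b]`. -/
theorem tvc_properties_in_c (a b : ℝ) (hab : a < b) (f : ℝ → ℝ)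
    (hf : Cadlag f a b) :
    AntitoneOn (fun c => (TVc f c a b).toReal) (Set.Ioi (0 : ℝ)) ∧
    ConvexOn ℝ (Set.Ioi (0 : ℝ)) (fun c => (TVc f c a b).toReal) ∧
    ContinuousOn (fun c => (TVc f c a b).toReal) (Set.Ioi (0 : ℝ)) ∧
    Tendsto (fun c => TVc f c a b) (nhdsWithin 0 (Set.Ioi 0)) (nhds (TVar f a b)) ∧
    (∀ c : ℝ, (∀ s ∈ Set.Icc a b, ∀ u ∈ Set.Icc a b, |f s - f u| ≤ c) →
      TVc f c a b = 0) :=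
  tvc_properties_in_c_general a b f hf
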